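/- arXiv:2002.00050 — 6 statements merged into one kernel-verified Lean document; each statement's English description precedes it below -/
import Mathlib

section
/- Let n and k be positive integers with gcd(n, k) = 1 and let q = 2^k. Let u ∈ F_{2^n} with u ∉ F_4, and set a = (u + u^q)^{q^2+1} / (u + u^{q^2})^{q+1}. Then the three elements x₁ = 1/(1 + (u + u^q)^{q-1}), x₂ = u^{q^2 - q}/(1 + (u + u^q)^{q-1}), and x₃ = (u + 1)^{q^2 - q}/(1 + (u + u^q)^{q-1}) are pairwise distinct solutions of the equation x^{q+1} + x + a = 0 in F_{2^n}. -/
/-!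
Write `A = u + u^q` and `B = u + u^{q²}`. In characteristic 2 one has `A + A^q = B`, so
`1 + A^{q-1} = B / A` and every `x = v^{q²-q} / (1 + A^{q-1})` equals `c A / B` with
`c = v^{q²-q}`. Such an `x` is a root as soon as `c^{q+1} A^q + c B^q + A^{q²} = 0`; multiplied by
`v^q` this becomes a cyclic identity in the conjugates `u^{q^i}`, `v^{q^i}` which holds whenever `v`
is an `𝔽_q`-affine function of `u`, in particular for `v = 1, u, u + 1`.

Two such values `v^{q²-q}`, `w^{q²-q}` agree only if `v / w` is fixed by `x ↦ x^q`; for the three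
choices of `v` this forces `u^q = u`. That is excluded: `u` would then be fixed by `x ↦ x^{q²}` and
by `x ↦ x^{2^n}`, hence by `x ↦ x^{2^{gcd(n, 2k)}}`, and `gcd(n, 2k) ∣ 2` puts `u` in `𝔽_4`.
-/

open Function

lemma isPeriodicPt_pow_iff {M : Type*} [Monoid M] {p n : ℕ} {x : M} :
    IsPeriodicPt (· ^ p) n x ↔ x ^ p ^ n = x := by
  rw [IsPeriodicPt, IsFixedPt, pow_iterate]

lemma FiniteField.pow_pow_two_eq_self_of_coprime {F : Type*} [Field F] [Fintype F] {p n k : ℕ}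
    (hcard : Fintype.card F = p ^ n) (hgcd : n.gcd k = 1) {u : F} (h : u ^ (p ^ k) ^ 2 = u) :
    u ^ p ^ 2 = u := by
  have hn : IsPeriodicPt (· ^ p) n u := isPeriodicPt_pow_iff.2 (hcard ▸ FiniteField.pow_card u)
  have h2k : IsPeriodicPt (· ^ p) (k * 2) u := isPeriodicPt_pow_iff.2 (by rwa [pow_mul])
  have hdvd : n.gcd (k * 2) ∣ 2 := by
    rw [Nat.gcd_comm, Nat.Coprime.gcd_mul_left_cancel 2 (Nat.coprime_comm.1 hgcd)]
    exact Nat.gcd_dvd_left 2 n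
  exact isPeriodicPt_pow_iff.1 ((hn.gcd h2k).trans_dvd hdvd)

lemma pow_succ_add_add_div_eq_zero {F : Type*} [Field F] {A B c : F} {q r : ℕ}
    (h : c ^ (q + 1) * A ^ q + c * B ^ q + A ^ r = 0) :
    (c * A / B) ^ (q + 1) + c * A / B + A ^ (r + 1) / B ^ (q + 1) = 0 := by
  rcases eq_or_ne B 0 with rfl | hB
  · simp
  calc (c * A / B) ^ (q + 1) + c * A / B + A ^ (r + 1) / B ^ (q + 1)
      = A * (c ^ (q + 1) * A ^ q + c * B ^ q + A ^ r) / B ^ (q + 1) := by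
        rw [div_pow]; field_simp; ring
    _ = 0 := by rw [h, mul_zero, zero_div]

section CharTwo

variable {F : Type*} [Field F] [CharP F 2] {k q : ℕ}

lemma add_pow_pow_of_eq_two_pow (hq : q = 2 ^ k) (x y : F) (i : ℕ) :
    (x + y) ^ q ^ i = x ^ q ^ i + y ^ q ^ i := by
  subst hq; rw [← pow_mul]; exact add_pow_char_pow x y 2 (k * i)

lemma add_pow_of_eq_two_pow (hq : q = 2 ^ k) (x y : F) : (x + y) ^ q = x ^ q + y ^ q := by
  simpa only [pow_one] using add_pow_pow_of_eq_two_pow hq x y 1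

lemma affine_pow_pow (hq : q = 2 ^ k) {α β : F} (hα : α ^ q = α) (hβ : β ^ q = β) (u : F) :
    ∀ i : ℕ, (α * u + β) ^ q ^ i = α * u ^ q ^ i + β
  | 0 => by simp
  | i + 1 => by
    rw [pow_succ, pow_mul, affine_pow_pow hq hα hβ u i, add_pow_of_eq_two_pow hq, mul_pow, hα, hβ,
      ← pow_mul]

lemma one_add_pow_sub_one_eq_div (hq : q = 2 ^ k) {u : F} (hA : u ^ q ≠ u) :
    1 + (u + u ^ q) ^ (q - 1) = (u + u ^ q ^ 2) / (u + u ^ q) := by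
  have hA₀ : u + u ^ q ≠ 0 := fun h ↦ hA (CharTwo.add_eq_zero.1 h).symm
  have hq₀ : q ≠ 0 := hq ▸ (Nat.two_pow_pos k).ne'
  rw [eq_div_iff hA₀, add_mul, one_mul, pow_sub_one_mul hq₀, add_pow_of_eq_two_pow hq,
    ← pow_mul, ← sq]
  linear_combination u ^ q * CharTwo.two_eq_zero (R := F)

lemma pow_sq_sub_pow_eq_pow_sq_sub_pow_iff (hq : q = 2 ^ k) {v w : F} (hv : v ≠ 0) (hw : w ≠ 0) :
    v ^ (q ^ 2 - q) = w ^ (q ^ 2 - q) ↔ v ^ q * w = v * w ^ q := by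
  have hexp : q ^ 2 - q = 2 ^ k * (q - 1) := by rw [← hq, Nat.mul_sub_one, sq]
  have hq₀ : q ≠ 0 := hq ▸ (Nat.two_pow_pos k).ne'
  rw [← div_eq_one_iff_eq (pow_ne_zero _ hw), ← div_pow, hexp,
    ExpChar.pow_prime_pow_mul_eq_one_iff, ← mul_left_inj' (div_ne_zero hv hw), one_mul,
    pow_sub_one_mul hq₀, div_pow, div_eq_div_iff (pow_ne_zero _ hw) hw]

/-- Multiplied by `v^q`, with `uᵢ = u^{qⁱ}` and `vᵢ = α uᵢ + β`, the left-hand side becomes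
`v₃ (u₁ + u₂) + v₂ (u₁ + u₃) + v₁ (u₂ + u₃)`, in which every monomial occurs twice. -/
lemma pow_succ_mul_add_mul_add_eq_zero (hq : q = 2 ^ k) {u α β c : F} (hα : α ^ q = α)
    (hβ : β ^ q = β) (hv : α * u + β ≠ 0) (hc : c * (α * u + β) ^ q = (α * u + β) ^ q ^ 2) :
    c ^ (q + 1) * (u + u ^ q) ^ q + c * (u + u ^ q ^ 2) ^ q + (u + u ^ q) ^ q ^ 2 = 0 := by
  set v := α * u + β
  have hc' : c ^ q * v ^ q ^ 2 = v ^ q ^ 3 := by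
    calc c ^ q * v ^ q ^ 2 = (c * v ^ q) ^ q := by rw [mul_pow, ← pow_mul, ← sq]
      _ = v ^ q ^ 3 := by rw [hc, ← pow_mul, ← pow_succ]
  have hv₁ := affine_pow_pow hq hα hβ u 1
  have hv₂ := affine_pow_pow hq hα hβ u 2
  have hv₃ := affine_pow_pow hq hα hβ u 3
  rw [pow_one] at hv₁
  have hA₁ : (u + u ^ q) ^ q = u ^ q + u ^ q ^ 2 := by
    rw [add_pow_of_eq_two_pow hq, ← pow_mul, ← sq]
  have hB₁ : (u + u ^ q ^ 2) ^ q = u ^ q + u ^ q ^ 3 := by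
    rw [add_pow_of_eq_two_pow hq, ← pow_mul, ← pow_succ]
  have hA₂ : (u + u ^ q) ^ q ^ 2 = u ^ q ^ 2 + u ^ q ^ 3 := by
    rw [add_pow_pow_of_eq_two_pow hq, ← pow_mul, ← pow_succ']
  rw [hA₁, hB₁, hA₂]
  apply mul_left_cancel₀ (pow_ne_zero q hv)
  linear_combination (c ^ q * (u ^ q + u ^ q ^ 2)) * hc + (u ^ q + u ^ q ^ 2) * hc'
    + (u ^ q + u ^ q ^ 3) * hc + (u ^ q + u ^ q ^ 2) * hv₃ + (u ^ q + u ^ q ^ 3) * hv₂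
    + (u ^ q ^ 2 + u ^ q ^ 3) * hv₁
    + (α * (u ^ q * u ^ q ^ 2 + u ^ q * u ^ q ^ 3 + u ^ q ^ 2 * u ^ q ^ 3)
      + β * (u ^ q + u ^ q ^ 2 + u ^ q ^ 3)) * CharTwo.two_eq_zero (R := F)

variable (q) in
def explicitSolution (u v : F) : F := v ^ (q ^ 2 - q) / (1 + (u + u ^ q) ^ (q - 1))

lemma explicitSolution_isRoot (hq : q = 2 ^ k) {u α β v : F} (hA : u ^ q ≠ u) (hα : α ^ q = α)
    (hβ : β ^ q = β) (hv : v = α * u + β) (hv₀ : v ≠ 0) :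
    explicitSolution q u v ^ (q + 1) + explicitSolution q u v
      + (u + u ^ q) ^ (q ^ 2 + 1) / (u + u ^ q ^ 2) ^ (q + 1) = 0 := by
  subst hv
  rw [explicitSolution, one_add_pow_sub_one_eq_div hq hA, div_div_eq_mul_div]
  exact pow_succ_add_add_div_eq_zero (pow_succ_mul_add_mul_add_eq_zero hq hα hβ hv₀
    (pow_sub_mul_pow _ (Nat.le_self_pow two_ne_zero q)))

lemma explicitSolution_ne (hq : q = 2 ^ k) {u v w : F} (hB : u ^ q ^ 2 ≠ u) (hv : v ≠ 0)
    (hw : w ≠ 0) (h : v ^ q * w ≠ v * w ^ q) :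
    explicitSolution q u v ≠ explicitSolution q u w := by
  have hA : u ^ q ≠ u := fun h ↦ hB (by rw [sq, pow_mul, h, h])
  have hD : 1 + (u + u ^ q) ^ (q - 1) ≠ 0 := by
    rw [one_add_pow_sub_one_eq_div hq hA]
    exact div_ne_zero (fun h ↦ hB (CharTwo.add_eq_zero.1 h).symm)
      (fun h ↦ hA (CharTwo.add_eq_zero.1 h).symm)
  rwa [explicitSolution, explicitSolution, Ne, div_left_inj' hD,
    pow_sq_sub_pow_eq_pow_sq_sub_pow_iff hq hv hw]

end CharTwo

theorem three_explicit_solutions_general (n k : ℕ)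
    (hgcd : Nat.gcd n k = 1) (q : ℕ) (hq : q = 2 ^ k)
    (F : Type*) [Field F] [Fintype F] (hcard : Fintype.card F = 2 ^ n)
    (u : F) (hu : u ^ 4 ≠ u)
    (a : F) (ha : a = (u + u ^ q) ^ (q ^ 2 + 1) / (u + u ^ (q ^ 2)) ^ (q + 1))
    (x₁ x₂ x₃ : F)
    (hx₁ : x₁ = 1 / (1 + (u + u ^ q) ^ (q - 1)))
    (hx₂ : x₂ = u ^ (q ^ 2 - q) / (1 + (u + u ^ q) ^ (q - 1)))
    (hx₃ : x₃ = (u + 1) ^ (q ^ 2 - q) / (1 + (u + u ^ q) ^ (q - 1))) :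
    x₁ ≠ x₂ ∧ x₁ ≠ x₃ ∧ x₂ ≠ x₃ ∧
    x₁ ^ (q + 1) + x₁ + a = 0 ∧
    x₂ ^ (q + 1) + x₂ + a = 0 ∧
    x₃ ^ (q + 1) + x₃ + a = 0 := by
  have : CharP F 2 := charP_of_card_eq_prime_pow hcard
  have hB : u ^ q ^ 2 ≠ u := fun h ↦
    hu (FiniteField.pow_pow_two_eq_self_of_coprime hcard hgcd (hq ▸ h))
  have hA : u ^ q ≠ u := fun h ↦ hB (by rw [sq, pow_mul, h, h])
  have hu₀ : u ≠ 0 := by rintro rfl; simp at hu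
  have hu₁ : u + 1 ≠ 0 := fun h ↦ by rw [CharTwo.add_eq_zero.1 h] at hu; simp at hu
  have hu₁q : (u + 1) ^ q = u ^ q + 1 := by rw [add_pow_of_eq_two_pow hq, one_pow]
  have hq₀ : q ≠ 0 := hq ▸ (Nat.two_pow_pos k).ne'
  replace hx₁ : x₁ = explicitSolution q u 1 := by rw [hx₁, explicitSolution, one_pow]
  subst hx₁ hx₂ hx₃ ha
  refine ⟨?_, ?_, ?_, ?_, ?_, ?_⟩
  · exact explicitSolution_ne hq hB one_ne_zero hu₀ fun h ↦ hA (by linear_combination -h)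
  · exact explicitSolution_ne hq hB one_ne_zero hu₁ fun h ↦ hA (by linear_combination -h - hu₁q)
  · exact explicitSolution_ne hq hB hu₀ hu₁ fun h ↦ hA (by linear_combination h + u * hu₁q)
  · exact explicitSolution_isRoot hq hA (zero_pow hq₀) (one_pow q) (by ring) one_ne_zero
  · exact explicitSolution_isRoot hq hA (one_pow q) (zero_pow hq₀) (by ring) hu₀
  · exact explicitSolution_isRoot hq hA (one_pow q) (one_pow q) (by ring) hu₁

/-- For `gcd(n,k) = 1`, `q = 2^k`, `u ∈ F_{2^n}` with `u ∉ F_4`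
(i.e. `u^4 ≠ u`) and `a = (u + u^q)^(q^2+1) / (u + u^(q^2))^(q+1)`, the elements
`x₁ = 1/(1 + (u + u^q)^(q-1))`, `x₂ = u^(q^2-q)/(1 + (u + u^q)^(q-1))`,
`x₃ = (u+1)^(q^2-q)/(1 + (u + u^q)^(q-1))` are pairwise distinct solutions of
`x^(q+1) + x + a = 0`. -/
theorem three_explicit_solutions (n k : ℕ) (hn : 0 < n) (hk : 0 < k)
    (hgcd : Nat.gcd n k = 1) (q : ℕ) (hq : q = 2 ^ k)
    (F : Type*) [Field F] [Fintype F] (hcard : Fintype.card F = 2 ^ n)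
    (u : F) (hu : u ^ 4 ≠ u)
    (a : F) (ha : a = (u + u ^ q) ^ (q ^ 2 + 1) / (u + u ^ (q ^ 2)) ^ (q + 1))
    (x₁ x₂ x₃ : F)
    (hx₁ : x₁ = 1 / (1 + (u + u ^ q) ^ (q - 1)))
    (hx₂ : x₂ = u ^ (q ^ 2 - q) / (1 + (u + u ^ q) ^ (q - 1)))
    (hx₃ : x₃ = (u + 1) ^ (q ^ 2 - q) / (1 + (u + u ^ q) ^ (q - 1))) :
    x₁ ≠ x₂ ∧ x₁ ≠ x₃ ∧ x₂ ≠ x₃ ∧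
    x₁ ^ (q + 1) + x₁ + a = 0 ∧
    x₂ ^ (q + 1) + x₂ + a = 0 ∧
    x₃ ^ (q + 1) + x₃ + a = 0 :=
  three_explicit_solutions_general n k hgcd q hq F hcard u hu a ha x₁ x₂ x₃ hx₁ hx₂ hx₃
end

section
/- Let k be a positive integer, let q = 2^k, let K be any field of characteristic 2 (in particular K = F_{2^n}), and let T_k(X) = Σ_{i=0}^{k-1} X^{2^i}. Then for every x ∈ K with x ≠ 0 and x ≠ 1, one has x^{2^{2k} - 2^k + 1} + (x + 1)^{2^{2k} - 2^k + 1} + 1 = T_k(x + x^2)^{q+1} / (x + x^2)^q. -/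
private lemma tk_sum (K : Type*) [Field K] [CharP K 2] (x : K) (k : ℕ) :
    ∑ i ∈ Finset.range k, (x + x ^ 2) ^ 2 ^ i = x + x ^ 2 ^ k := by
  have h2 : (2 : K) = 0 := CharTwo.two_eq_zero
  induction k with
  | zero => simp [CharTwo.add_self_eq_zero]
  | succ n ih =>
      rw [Finset.sum_range_succ, ih, add_pow_char_pow]
      have h1 : (x ^ 2) ^ 2 ^ n = x ^ 2 ^ (n + 1) := by
        rw [← pow_mul, pow_succ, mul_comm]
      rw [h1]
      linear_combination x ^ 2 ^ n * h2

/-- Over any field `K` of characteristic 2, for `q = 2^k` and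
`T_k(X) = ∑_{i<k} X^(2^i)`, and every `x ∉ {0,1}`:
`x^(2^(2k)-2^k+1) + (x+1)^(2^(2k)-2^k+1) + 1 = T_k(x+x^2)^(q+1) / (x+x^2)^q`. -/
theorem kasami_MCM_identity (k : ℕ) (hk : 0 < k) (q : ℕ) (hq : q = 2 ^ k)
    (K : Type*) [Field K] [CharP K 2] (x : K) (hx0 : x ≠ 0) (hx1 : x ≠ 1) :
    x ^ (2 ^ (2 * k) - 2 ^ k + 1) + (x + 1) ^ (2 ^ (2 * k) - 2 ^ k + 1) + 1 =
      (∑ i ∈ Finset.range k, (x + x ^ 2) ^ 2 ^ i) ^ (q + 1) / (x + x ^ 2) ^ q := by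
  have h2 : (2 : K) = 0 := CharTwo.two_eq_zero
  have hx1' : x + 1 ≠ 0 := by
    intro h
    exact hx1 (by linear_combination h - h2)
  have hy : x + x ^ 2 ≠ 0 := by
    have hfac : x + x ^ 2 = x * (x + 1) := by ring
    rw [hfac]
    exact mul_ne_zero hx0 hx1'
  have hq1 : 1 ≤ q := hq ▸ Nat.one_le_two_pow
  have hqq : q ≤ q ^ 2 := by nlinarith
  have h2k : 2 ^ (2 * k) = q ^ 2 := by rw [hq, ← pow_mul, mul_comm]
  set m : ℕ := q ^ 2 - q with hm
  have hmq : m + q = q ^ 2 := Nat.sub_add_cancel hqq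
  have hexp : 2 ^ (2 * k) - 2 ^ k + 1 = m + 1 := by rw [h2k, ← hq]
  rw [hexp, tk_sum, ← hq]
  have hfrob : ∀ y z : K, (y + z) ^ q = y ^ q + z ^ q := by
    intro y z
    rw [hq]
    exact add_pow_char_pow y z 2 k
  have hfrob2 : ∀ y z : K, (y + z) ^ q ^ 2 = y ^ q ^ 2 + z ^ q ^ 2 := by
    intro y z
    rw [← h2k]
    exact add_pow_char_pow y z 2 (2 * k)
  have hrel : (x + 1) ^ m * (x ^ q + 1) = x ^ q * x ^ m + 1 := by
    have e1 : (x + 1) ^ m * (x ^ q + 1) = (x + 1) ^ (q ^ 2) := by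
      rw [← hmq, pow_add, hfrob, one_pow]
    have e2 : (x + 1) ^ (q ^ 2) = x ^ (q ^ 2) + 1 := by
      rw [hfrob2, one_pow]
    have e3 : x ^ (q ^ 2) = x ^ q * x ^ m := by rw [← hmq, pow_add]; ring
    rw [e1, e2, e3]
  rw [eq_div_iff (pow_ne_zero _ hy)]
  have hlhs : (x + x ^ 2) ^ q = x ^ q + (x ^ q) ^ 2 := by
    rw [hfrob, ← pow_mul, mul_comm 2 q, pow_mul]
  have hrhs : (x + x ^ q) ^ (q + 1) = (x ^ q + x ^ m * x ^ q) * (x + x ^ q) := by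
    have e4 : (x ^ q) ^ q = x ^ m * x ^ q := by
      rw [← pow_mul, show q * q = m + q by rw [hmq]; ring, pow_add]
    rw [pow_succ, hfrob, e4]
  rw [pow_succ, pow_succ, hlhs, hrhs]
  linear_combination (x + 1) * x ^ q * hrel + ((x ^ q) ^ 2 * x ^ m * x + x ^ q) * h2
end

section
/- Let n and k be positive integers with gcd(n, k) = 1, let q = 2^k, and let c ∈ F_{2^n}, c ≠ 0. If the equation (v + 1)^{q+1} + c·v = 0 has exactly three solutions in F_{2^n}, then there exists u ∈ F_{2^n} with u ∉ F_4 such that c = ((u + u^{q^2})^{q+1} / (u + u^q)^{q^2+1})^q and the three solutions are v₁ = 1/(u + u^q)^{q^2 − q}, v₂ = u^{q^3 − q}/(u + u^q)^{q^2 − q}, and v₃ = (u + 1)^{q^3 − q}/(u + u^q)^{q^2 − q}. -/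
set_option maxHeartbeats 1000000 in
/-- For `gcd(n,k) = 1`, `q = 2^k`, `c ≠ 0`: if
`(v+1)^(q+1) + c·v = 0` has exactly three solutions in `F_{2^n}`, then there is
`u ∉ F_4` (i.e. `u^4 ≠ u`) with `c = ((u + u^(q^2))^(q+1) / (u + u^q)^(q^2+1))^q`
and the three solutions are `v₁ = 1/(u+u^q)^(q^2-q)`,
`v₂ = u^(q^3-q)/(u+u^q)^(q^2-q)`, `v₃ = (u+1)^(q^3-q)/(u+u^q)^(q^2-q)`. -/
theorem three_solutions_v_equation (n k : ℕ) (hn : 0 < n) (hk : 0 < k)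
    (hgcd : Nat.gcd n k = 1) (q : ℕ) (hq : q = 2 ^ k)
    (F : Type*) [Field F] [Fintype F] (hcard : Fintype.card F = 2 ^ n)
    (c : F) (hc : c ≠ 0)
    (h3 : {v : F | (v + 1) ^ (q + 1) + c * v = 0}.ncard = 3) :
    ∃ u : F, u ^ 4 ≠ u ∧
      c = ((u + u ^ (q ^ 2)) ^ (q + 1) / (u + u ^ q) ^ (q ^ 2 + 1)) ^ q ∧
      {v : F | (v + 1) ^ (q + 1) + c * v = 0} =
        {1 / (u + u ^ q) ^ (q ^ 2 - q),
         u ^ (q ^ 3 - q) / (u + u ^ q) ^ (q ^ 2 - q),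
         (u + 1) ^ (q ^ 3 - q) / (u + u ^ q) ^ (q ^ 2 - q)} := by
  classical
  have hq2le : 2 ≤ q := by
    rw [hq]
    calc 2 = 2 ^ 1 := rfl
    _ ≤ 2 ^ k := Nat.pow_le_pow_right (by omega) hk
  have hq0 : q ≠ 0 := by omega
  -- characteristic 2
  haveI hp2 : CharP F 2 := by
    have hinst := ringChar.charP F
    have hprime : (ringChar F).Prime := CharP.char_is_prime F (ringChar F)
    obtain ⟨m, _, hcard'⟩ := FiniteField.card F (ringChar F)
    have hdvd : (ringChar F) ∣ 2 ^ n := by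
      rw [← hcard, hcard']
      exact dvd_pow_self _ (by exact_mod_cast m.ne_zero)
    have h2 : ringChar F = 2 :=
      (Nat.prime_dvd_prime_iff_eq hprime Nat.prime_two).mp (hprime.dvd_of_dvd_pow hdvd)
    rwa [h2] at hinst
  haveI : Fact (Nat.Prime 2) := ⟨Nat.prime_two⟩
  have htwo : (2 : F) = 0 := by
    have := CharP.cast_eq_zero F 2
    simpa using this
  have hself : ∀ x : F, x + x = 0 := fun x => by rw [← two_mul, htwo, zero_mul]
  have hcanc : ∀ x y : F, x + y = 0 → x = y := fun x y h => by
    rw [← add_zero x, ← hself y, ← add_assoc, h, zero_add]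
  have hone : (1 : F) + 1 = 0 := hself 1
  have hφadd : ∀ x y : F, (x + y) ^ q = x ^ q + y ^ q := fun x y => by
    rw [hq]; exact add_pow_char_pow (R := F) (p := 2) (n := k) x y
  have hφinj : ∀ x y : F, x ^ q = y ^ q → x = y := fun x y h => by
    have h0 : (x + y) ^ q = 0 := by rw [hφadd, h, hself]
    exact hcanc x y (by simpa [hq0] using pow_eq_zero_iff hq0 |>.mp h0)
  -- extract the three solutions
  obtain ⟨a, b, d, hab, had, hbd, hS⟩ := Set.ncard_eq_three.mp h3
  have hmem : ∀ v ∈ ({a, b, d} : Set F), (v + 1) ^ (q + 1) + c * v = 0 := by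
    rw [← hS]; exact fun v hv => hv
  have Ea : (a + 1) ^ (q + 1) = c * a := hcanc _ _ (hmem a (by simp))
  have Eb : (b + 1) ^ (q + 1) = c * b := hcanc _ _ (hmem b (by simp))
  have Ed : (d + 1) ^ (q + 1) = c * d := hcanc _ _ (hmem d (by simp))
  have hqp1 : q + 1 ≠ 0 := by omega
  have hsol0 : ∀ v : F, (v + 1) ^ (q + 1) = c * v → v ≠ 0 := by
    intro v hv h0
    rw [h0] at hv
    simp at hv
  have hsol1 : ∀ v : F, (v + 1) ^ (q + 1) = c * v → v ≠ 1 := by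
    intro v hv h1
    rw [h1, hone, zero_pow hqp1, mul_one] at hv
    exact hc hv.symm
  have ha0 := hsol0 a Ea
  have hb0 := hsol0 b Eb
  have hd0 := hsol0 d Ed
  have ha1 := hsol1 a Ea
  have hb1 := hsol1 b Eb
  have hd1 := hsol1 d Ed
  -- the x-coordinates
  set x1 := a + 1 with hx1d
  set x2 := b + 1 with hx2d
  set x3 := d + 1 with hx3d
  have hx1a : x1 + 1 = a := by rw [hx1d, add_assoc, hone, add_zero]
  have hx2b : x2 + 1 = b := by rw [hx2d, add_assoc, hone, add_zero]
  have hx3d' : x3 + 1 = d := by rw [hx3d, add_assoc, hone, add_zero]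
  have hx1ne : x1 ≠ 0 := fun h => ha1 (by rw [hx1d] at h; exact hcanc a 1 h)
  have hx2ne : x2 ≠ 0 := fun h => hb1 (by rw [hx2d] at h; exact hcanc b 1 h)
  have hx3ne : x3 ≠ 0 := fun h => hd1 (by rw [hx3d] at h; exact hcanc d 1 h)
  have hx1p : x1 + 1 ≠ 0 := by rw [hx1a]; exact ha0
  have hx2p : x2 + 1 ≠ 0 := by rw [hx2b]; exact hb0
  have hx3p : x3 + 1 ≠ 0 := by rw [hx3d']; exact hd0
  have h12 : x1 ≠ x2 := fun h => hab (by rw [hx1d, hx2d] at h; exact add_right_cancel h)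
  have h13 : x1 ≠ x3 := fun h => had (by rw [hx1d, hx3d] at h; exact add_right_cancel h)
  have h23 : x2 ≠ x3 := fun h => hbd (by rw [hx2d, hx3d] at h; exact add_right_cancel h)
  have hs23 : x2 + x3 ≠ 0 := fun h => h23 (hcanc _ _ h)
  have hs13 : x1 + x3 ≠ 0 := fun h => h13 (hcanc _ _ h)
  have hs12 : x1 + x2 ≠ 0 := fun h => h12 (hcanc _ _ h)
  -- equations
  have E1 : x1 ^ q * x1 = c * (x1 + 1) := by rw [hx1a, ← pow_succ]; exact Ea
  have E2 : x2 ^ q * x2 = c * (x2 + 1) := by rw [hx2b, ← pow_succ]; exact Eb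
  have E3 : x3 ^ q * x3 = c * (x3 + 1) := by rw [hx3d', ← pow_succ]; exact Ed
  -- z and its Frobenius iterates
  obtain ⟨z, hzd⟩ : ∃ w : F, w = (x1 + x3) / (x2 + x3) := ⟨_, rfl⟩
  have hL0p : z * (x2 + x3) = x1 + x3 := by rw [hzd]; exact div_mul_cancel₀ _ hs23
  have hzne : z ≠ 0 := by rw [hzd]; exact div_ne_zero hs13 hs23
  have hz1 : z ≠ 1 := by
    intro h
    have h0 := hL0p
    rw [h, one_mul] at h0
    exact h12 ((add_right_cancel h0).symm)
  obtain ⟨z1, hz1d⟩ : ∃ w : F, w = z ^ q := ⟨_, rfl⟩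
  obtain ⟨z2, hz2d⟩ : ∃ w : F, w = z1 ^ q := ⟨_, rfl⟩
  obtain ⟨z3, hz3d⟩ : ∃ w : F, w = z2 ^ q := ⟨_, rfl⟩
  have hL1 : z1 * (x2 ^ q + x3 ^ q) = x1 ^ q + x3 ^ q := by
    have h0 := congrArg (· ^ q) hL0p
    simp only [mul_pow] at h0
    rw [hφadd x2 x3, hφadd x1 x3, ← hz1d] at h0
    exact h0
  have hL2p : z1 * x1 = z * x2 := by
    have hmul : (c * (x2 + x3)) * (z1 * x1) = (c * (x2 + x3)) * (z * x2) := by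
      linear_combination (x1*x2*x3) * hL1 - z1*x1*x3 * E2 - (z1*x1*x2 - x1*x2) * E3 + x2*x3 * E1 - c*x2 * hL0p + (c*x1*x2*x3 - c*z1*x1*x2*x3) * htwo
    exact mul_left_cancel₀ (mul_ne_zero hc hs23) hmul
  have hL2q : z2 * x1 ^ q = z1 * x2 ^ q := by
    have h0 := congrArg (· ^ q) hL2p
    simp only [mul_pow] at h0
    rw [← hz1d, ← hz2d] at h0
    exact h0
  have hL3p : z2 * (x1 + 1) = z * (x2 + 1) := by
    have hmul : (c * x2) * (z2 * (x1 + 1)) = (c * x2) * (z * (x2 + 1)) := by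
      linear_combination x1*x2 * hL2q - z2*x2 * E1 + z1*x1 * E2 + (c*(x2+1)) * hL2p
    exact mul_left_cancel₀ (mul_ne_zero hc hx2ne) hmul
  have hL3q : z3 * (x1 ^ q + 1) = z1 * (x2 ^ q + 1) := by
    have h0 := congrArg (· ^ q) hL3p
    simp only [mul_pow] at h0
    rw [hφadd x1 1, hφadd x2 1, one_pow, ← hz1d, ← hz3d] at h0
    exact h0
  have hL4p : z3 * (c * x1 + c + x1) = z * (c * x2 + c + x2) := by
    have hmul : x2 * (z3 * (c * x1 + c + x1)) = x2 * (z * (c * x2 + c + x2)) := by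
      linear_combination x1*x2 * hL3q - z3*x2 * E1 + z1*x1 * E2 + (c*x2+c+x2) * hL2p
    exact mul_left_cancel₀ hx2ne hmul
  -- nonvanishing facts
  have hz1nz : z1 ≠ 0 := by rw [hz1d]; exact pow_ne_zero _ hzne
  have hz2nz : z2 ≠ 0 := by rw [hz2d]; exact pow_ne_zero _ hz1nz
  have hz1z : z1 ≠ z := fun h => by
    rw [h] at hL2p
    exact h12 (mul_left_cancel₀ hzne hL2p)
  have hz2z1 : z2 ≠ z1 := fun h => hz1z (hφinj _ _ (by rw [← hz2d, h, hz1d]))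
  have hz3z2 : z3 ≠ z2 := fun h => hz2z1 (hφinj _ _ (by rw [← hz3d, h, hz2d]))
  have hzz1 : z + z1 ≠ 0 := fun h => hz1z ((hcanc _ _ h).symm)
  have hz1z2 : z1 + z2 ≠ 0 := fun h => hz2z1 ((hcanc _ _ h).symm)
  have hz2z3 : z2 + z3 ≠ 0 := fun h => hz3z2 ((hcanc _ _ h).symm)
  have hzp1 : z + 1 ≠ 0 := fun h => hz1 (hcanc _ _ h)
  have hw1 : c * x1 + c + x1 ≠ 0 := by
    have hx1q1 : x1 ^ q + 1 ≠ 0 := fun h => by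
      have h1 : x1 ^ q = 1 := hcanc _ _ h
      have h2 : x1 = 1 := hφinj x1 1 (by rw [h1, one_pow])
      exact ha0 (by rw [← hx1a, h2, hone])
    intro h
    apply mul_ne_zero hx1ne hx1q1
    calc x1 * (x1 ^ q + 1) = x1 ^ q * x1 + x1 := by ring
    _ = c * (x1 + 1) + x1 := by rw [E1]
    _ = c * x1 + c + x1 := by ring
    _ = 0 := h
  -- sum formulas
  have hS1 : (z + z1) * x1 = z * (x1 + x2) := by linear_combination hL2p
  have hS2 : (z1 + z2) * (x1 * (x1 + 1)) = z * (x1 + x2) := by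
    linear_combination (x1+1) * hL2p + x1 * hL3p + (z*x1*x2) * htwo
  have hS3 : (z + z2) * (x1 + 1) = z * (x1 + x2) := by linear_combination hL3p + z * htwo
  have hS4 : (z2 + z3) * ((x1 + 1) * (c*x1 + c + x1)) = z * (x1 + x2) := by
    linear_combination (c*x1+c+x1) * hL3p + (x1+1) * hL4p
      + (z*(c*x1*x2 + x1*x2 + c*x1 + c*x2 + c)) * htwo
  have hS5 : (z1 + z3) * (x1 * (c*x1 + c + x1)) = z * (c * (x1 + x2)) := by
    linear_combination (c*x1+c+x1) * hL2p + x1 * hL4p + (z*(c*x1*x2 + x1*x2)) * htwo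
  -- construct u
  obtain ⟨m, hm⟩ : ∃ m, ((n - k % n) % n) + k = n * m := by
    rcases Nat.eq_zero_or_pos (k % n) with h0 | hpos
    · obtain ⟨t, ht⟩ := Nat.dvd_of_mod_eq_zero h0
      exact ⟨t, by simp [h0, Nat.mod_self, ht]⟩
    · have hlt : k % n < n := Nat.mod_lt _ hn
      have hd := Nat.div_add_mod k n
      refine ⟨k / n + 1, ?_⟩
      have he : (n - k % n) % n = n - k % n := Nat.mod_eq_of_lt (by omega)
      rw [he, Nat.mul_add, Nat.mul_one]
      generalize hM : n * (k / n) = M at hd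
      omega
  have hpowcard : ∀ (x : F) (t : ℕ), x ^ 2 ^ (n * t) = x := by
    intro x t
    induction t with
    | zero => simp
    | succ t ih =>
      rw [Nat.mul_succ, pow_add, pow_mul, ih, ← hcard, FiniteField.pow_card]
  obtain ⟨u, hud⟩ : ∃ w : F, w = z ^ 2 ^ ((n - k % n) % n) := ⟨_, rfl⟩
  have hu : u ^ q = z := by
    rw [hud, hq, ← pow_mul, ← pow_add, hm, hpowcard]
  have hune : u ≠ 0 := fun h => hzne (by rw [← hu, h, zero_pow hq0])
  have huq2 : u ^ q ^ 2 = z1 := by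
    rw [hz1d, ← hu, ← pow_mul, ← pow_two]
  have huq3 : u ^ q ^ 3 = z2 := by
    rw [hz2d, hz1d, ← hu, ← pow_mul, ← pow_mul, show q * (q * q) = q ^ 3 by ring]
  -- u is not in F_4
  have hu4 : u ^ 4 ≠ u := by
    intro h
    have h4k : ∀ j : ℕ, u ^ 4 ^ j = u := by
      intro j
      induction j with
      | zero => simp
      | succ j ih => rw [pow_succ, pow_mul, ih, h]
    have hq24 : q ^ 2 = 4 ^ k := by
      rw [hq, show (4:ℕ) = 2 ^ 2 from rfl, ← pow_mul, ← pow_mul, Nat.mul_comm]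
    have hq2u : u ^ q ^ 2 = u := by rw [hq24, h4k]
    have hz2eq : z2 = z := by
      calc z2 = (u ^ q ^ 2) ^ q := by rw [huq2]; exact hz2d
      _ = u ^ q := by rw [hq2u]
      _ = z := hu
    rw [hz2eq] at hL3p
    have h5 := mul_left_cancel₀ hzne hL3p
    exact h12 (add_right_cancel h5)
  -- power computations
  have hWq : (u + z) ^ q = z + z1 := by rw [hφadd, hu, ← hz1d]
  have hWne : u + z ≠ 0 := fun h => hzz1 (by rw [← hWq, h, zero_pow hq0])
  have hqq2 : q ≤ q ^ 2 := Nat.le_self_pow two_ne_zero q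
  have hqq3 : q ≤ q ^ 3 := Nat.le_self_pow three_ne_zero q
  have hW2 : (u + z) ^ q ^ 2 = z1 + z2 := by
    rw [pow_two, pow_mul, hWq, hφadd, ← hz1d, ← hz2d]
  have hWpow : (u + z) ^ (q ^ 2 - q) = (z1 + z2) / (z + z1) := by
    rw [eq_div_iff hzz1, ← hWq, ← pow_add, show q ^ 2 - q + q = q ^ 2 by omega, hW2]
  have hupow : u ^ (q ^ 3 - q) = z2 / z := by
    rw [eq_div_iff hzne, ← hu, ← pow_add, show q ^ 3 - q + q = q ^ 3 by omega, huq3]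
  have hu1q : (u + 1) ^ q = z + 1 := by rw [hφadd, hu, one_pow]
  have hu1ne : u + 1 ≠ 0 := fun h => hzp1 (by rw [← hu1q, h, zero_pow hq0])
  have hu1q3 : (u + 1) ^ q ^ 3 = z2 + 1 := by
    rw [show q ^ 3 = q * q * q by ring, pow_mul, pow_mul, hu1q, hφadd, one_pow, ← hz1d,
      hφadd, one_pow, ← hz2d]
  have hu1pow : (u + 1) ^ (q ^ 3 - q) = (z2 + 1) / (z + 1) := by
    rw [eq_div_iff hzp1, ← hu1q, ← pow_add, show q ^ 3 - q + q = q ^ 3 by omega, hu1q3]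
  refine ⟨u, hu4, ?_, ?_⟩
  · -- the c formula
    have hnum : (u + u ^ q ^ 2) ^ ((q + 1) * q) = (z1 + z3) * (z + z2) := by
      rw [huq2, mul_comm (q + 1) q, pow_mul, hφadd u z1, hu, ← hz2d, pow_succ,
        hφadd z z2, ← hz1d, ← hz3d]
    have hden : (u + u ^ q) ^ ((q ^ 2 + 1) * q) = (z2 + z3) * (z + z1) := by
      rw [hu, mul_comm (q ^ 2 + 1) q, pow_mul, hWq, pow_succ, pow_two, pow_mul,
        hφadd z z1, ← hz1d, ← hz2d, hφadd z1 z2, ← hz2d, ← hz3d]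
    rw [div_pow, ← pow_mul, ← pow_mul, hnum, hden, eq_div_iff (mul_ne_zero hz2z3 hzz1)]
    have key : (x1 * ((x1+1) * (c*x1+c+x1))) * (c * ((z2+z3)*(z+z1)))
        = (x1 * ((x1+1) * (c*x1+c+x1))) * ((z1+z3)*(z+z2)) := by
      linear_combination (c*(z+z1)*x1) * hS4 - ((z+z2)*(x1+1)) * hS5
        + (c*z*(x1+x2)) * hS1 - (c*z*(x1+x2)) * hS3
    exact mul_left_cancel₀ (mul_ne_zero hx1ne (mul_ne_zero hx1p hw1)) key
  · -- the set of solutions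
    have hV1 : (1 : F) / (u + u ^ q) ^ (q ^ 2 - q) = a := by
      rw [hu, hWpow, one_div_div, div_eq_iff hz1z2, ← hx1a]
      have key : (x1 * (x1+1)) * (z + z1) = (x1 * (x1+1)) * ((x1+1) * (z1+z2)) := by
        linear_combination (x1+1) * hS1 - (x1+1) * hS2
      exact mul_left_cancel₀ (mul_ne_zero hx1ne hx1p) key
    have hV2 : u ^ (q ^ 3 - q) / (u + u ^ q) ^ (q ^ 2 - q) = b := by
      rw [hu, hupow, hWpow, div_div_eq_mul_div, div_eq_iff hz1z2, ← hx2b,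
        div_mul_eq_mul_div, div_eq_iff hzne]
      have key : (x1 * (x1+1)) * (z2 * (z + z1)) = (x1 * (x1+1)) * ((x2+1) * (z1+z2) * z) := by
        linear_combination ((x1+1)*z2) * hS1 - (z*(x2+1)) * hS2 + (z*(x1+x2)) * hL3p
      exact mul_left_cancel₀ (mul_ne_zero hx1ne hx1p) key
    have hV3 : (u + 1) ^ (q ^ 3 - q) / (u + u ^ q) ^ (q ^ 2 - q) = d := by
      rw [hu, hu1pow, hWpow, div_div_eq_mul_div, div_eq_iff hz1z2, ← hx3d',
        div_mul_eq_mul_div, div_eq_iff hzp1]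
      have key : (x1 * (x1+1)) * ((z2 + 1) * (z + z1))
          = (x1 * (x1+1)) * ((x3+1) * (z1+z2) * (z+1)) := by
        linear_combination ((z2+1)*(x1+1)) * hS1 - ((x3+1)*(z+1)) * hS2
          + (z*(x1+x2)) * hL3p + (z*(x1+x2)) * hL0p + (z*(x1+x2)*(x1 - z*x3)) * htwo
      exact mul_left_cancel₀ (mul_ne_zero hx1ne hx1p) key
    rw [hS, hV1, hV2, hV3]
end

section
/- Let n be an odd positive integer and k a positive integer with gcd(k, n) = 1, let q = 2^k, and let s be the multiplicative inverse of q − 1 modulo 2^n − 1. Let c ∈ F_{2^n}. If the equation (v + 1)^{q+1} + c·v = 0 has exactly three solutions in F_{2^n}, then every solution v of this equation satisfies Tr(v^{−s}) = 0. -/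
/-! Let `w ≠ v` be a second solution and `r = (w + 1) / (v + 1)`. Eliminating `c` between the two
equations gives `v r (1 + r^q) = 1 + r`. Since `s` inverts `q - 1` on `Fˣ`, `z = r^s` satisfies
`z^q = r z`, so `T = z (1 + r) = z + z^q` has `v T^q = T`, i.e. `T^(q-1) = v⁻¹` and
`v^{-s} = T = z + z^q`. The trace is additive and Frobenius-invariant, so it kills `z + z^q`. -/

theorem FiniteField.pow_eq_self_of_modEq {F : Type*} [Field F] [Fintype F] {a : F} (ha : a ≠ 0)
    {m : ℕ} (hm : m ≡ 1 [MOD Fintype.card F - 1]) : a ^ m = a := by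
  classical
  have h := (pow_eq_pow_iff_modEq (x := Units.mk0 a ha)).mpr
    (hm.of_dvd (Fintype.card_units (α := F) ▸ orderOf_dvd_card))
  simpa using congrArg Units.val h

section Trace

open Finset

variable {R : Type*} [CommRing R] {p n : ℕ} {a : R}

theorem sum_range_pow_pow_pow_eq_of_pow_eq_self (ha : a ^ p ^ n = a) :
    ∑ i ∈ range n, (a ^ p) ^ p ^ i = ∑ i ∈ range n, a ^ p ^ i := by
  have hshift := (sum_range_succ' (fun i ↦ a ^ p ^ i) n).symm.trans (sum_range_succ _ n)
  rw [ha, pow_zero, pow_one] at hshift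
  simpa only [← pow_mul, ← pow_succ'] using add_right_cancel hshift

theorem sum_range_pow_pow_pow_pow_eq_of_pow_eq_self (ha : a ^ p ^ n = a) (k : ℕ) :
    ∑ i ∈ range n, (a ^ p ^ k) ^ p ^ i = ∑ i ∈ range n, a ^ p ^ i := by
  induction k with
  | zero => simp
  | succ k ih =>
    rw [pow_succ, pow_mul, sum_range_pow_pow_pow_eq_of_pow_eq_self (by rw [pow_right_comm, ha]), ih]

theorem sum_range_add_pow_two_pow_pow_two_pow_eq_zero [CharP R 2] (ha : a ^ 2 ^ n = a) (k : ℕ) :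
    ∑ i ∈ range n, (a + a ^ 2 ^ k) ^ 2 ^ i = 0 := by
  simp only [add_pow_char_pow, sum_add_distrib,
    sum_range_pow_pow_pow_pow_eq_of_pow_eq_self ha, CharTwo.add_self_eq_zero]

end Trace

section Solutions

variable {F : Type*} [Field F] {m : ℕ} {c v w : F}

theorem ne_zero_of_add_one_pow_add_mul_eq_zero (hv : (v + 1) ^ m + c * v = 0) : v ≠ 0 := by
  rintro rfl
  simp at hv

theorem add_one_ne_zero_of_add_one_pow_add_mul_eq_zero (hv : (v + 1) ^ (m + 1) + c * v = 0)
    (hw : (w + 1) ^ (m + 1) + c * w = 0) (hvw : v ≠ w) : v + 1 ≠ 0 := by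
  intro hv1
  have hc : c = 0 := by
    simpa [hv1, ne_zero_of_add_one_pow_add_mul_eq_zero hv] using hv
  have hw1 : w + 1 = 0 := by simpa [hc] using hw
  exact hvw (add_right_cancel (hv1.trans hw1.symm))

variable [CharP F 2]

theorem mul_div_mul_one_add_pow_eq (hv : (v + 1) ^ (m + 1) + c * v = 0)
    (hw : (w + 1) ^ (m + 1) + c * w = 0) (hvw : v ≠ w) :
    v * ((w + 1) / (v + 1)) * (1 + ((w + 1) / (v + 1)) ^ m) = 1 + (w + 1) / (v + 1) := by
  have hu := add_one_ne_zero_of_add_one_pow_add_mul_eq_zero hv hw hvw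
  have hwr : w + 1 = (w + 1) / (v + 1) * (v + 1) := (div_mul_cancel₀ _ hu).symm
  generalize (w + 1) / (v + 1) = r at hwr ⊢
  rw [CharTwo.add_eq_zero] at hv hw
  rw [hwr, mul_pow] at hw
  have hvr : v * r ^ (m + 1) = w := by
    apply mul_right_cancel₀ (pow_ne_zero (m + 1) hu)
    linear_combination v * hw - w * hv
  linear_combination hvr + hwr + (v * r - 1) * (CharTwo.two_eq_zero : (2 : F) = 0)

variable [Fintype F] {k s : ℕ}

theorem inv_pow_eq_pow_add_pow_pow_two_pow (hs : (2 ^ k - 1) * s ≡ 1 [MOD Fintype.card F - 1])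
    {r : F} (hr : r ≠ 0) (hr1 : 1 + r ≠ 0) (h : v * r * (1 + r ^ 2 ^ k) = 1 + r) :
    (v⁻¹) ^ s = r ^ s + (r ^ s) ^ 2 ^ k := by
  have hq : 2 ^ k = 2 ^ k - 1 + 1 := (Nat.sub_add_cancel Nat.one_le_two_pow).symm
  have hz : (r ^ s) ^ 2 ^ k = r * r ^ s := by
    rw [hq, pow_succ, ← pow_mul, mul_comm s, FiniteField.pow_eq_self_of_modEq hr hs]
  set z := r ^ s
  have hT0 : z * (1 + r) ≠ 0 := mul_ne_zero (pow_ne_zero s hr) hr1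
  have hvT : v * (z * (1 + r)) ^ 2 ^ k = z * (1 + r) := by
    rw [mul_pow, hz, add_pow_char_pow, one_pow]
    linear_combination z * h
  have hTinv : (z * (1 + r)) ^ (2 ^ k - 1) = v⁻¹ := by
    refine eq_inv_of_mul_eq_one_right (mul_right_cancel₀ hT0 ?_)
    rw [one_mul, mul_assoc, ← pow_succ, ← hq, hvT]
  calc (v⁻¹) ^ s = ((z * (1 + r)) ^ (2 ^ k - 1)) ^ s := by rw [hTinv]
    _ = z * (1 + r) := by rw [← pow_mul, FiniteField.pow_eq_self_of_modEq hT0 hs]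
    _ = z + z ^ 2 ^ k := by rw [hz]; ring

theorem exists_inv_pow_eq_add_pow_two_pow (hs : (2 ^ k - 1) * s ≡ 1 [MOD Fintype.card F - 1])
    (hv : (v + 1) ^ (2 ^ k + 1) + c * v = 0) (hw : (w + 1) ^ (2 ^ k + 1) + c * w = 0)
    (hvw : v ≠ w) : ∃ z : F, (v⁻¹) ^ s = z + z ^ 2 ^ k := by
  have hv1 := add_one_ne_zero_of_add_one_pow_add_mul_eq_zero hv hw hvw
  have hw1 := add_one_ne_zero_of_add_one_pow_add_mul_eq_zero hw hv hvw.symm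
  have hr1 : 1 + (w + 1) / (v + 1) ≠ 0 := by
    rw [Ne, CharTwo.add_eq_zero, eq_div_iff hv1, one_mul]
    exact fun h ↦ hvw (add_right_cancel h)
  exact ⟨_, inv_pow_eq_pow_add_pow_pow_two_pow hs (div_ne_zero hw1 hv1) hr1
    (mul_div_mul_one_add_pow_eq hv hw hvw)⟩

end Solutions

theorem three_solutions_trace_zero_general (n k : ℕ) (q : ℕ) (hq : q = 2 ^ k)
    (s : ℕ) (hs : (q - 1) * s ≡ 1 [MOD 2 ^ n - 1])
    (F : Type*) [Field F] [Fintype F] (hcard : Fintype.card F = 2 ^ n)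
    (c : F) (h3 : {v : F | (v + 1) ^ (q + 1) + c * v = 0}.ncard = 3) :
    ∀ v : F, (v + 1) ^ (q + 1) + c * v = 0 →
      (∑ i ∈ Finset.range n, ((v⁻¹) ^ s) ^ 2 ^ i) = 0 := by
  subst hq
  have : CharP F 2 := charP_of_card_eq_prime_pow hcard
  intro v hv
  obtain ⟨w, hw, hwv⟩ := Set.exists_ne_of_one_lt_ncard (by rw [h3]; norm_num) v
  obtain ⟨z, hz⟩ := exists_inv_pow_eq_add_pow_two_pow (hcard ▸ hs) hv hw hwv.symm
  rw [hz]
  exact sum_range_add_pow_two_pow_pow_two_pow_eq_zero (hcard ▸ FiniteField.pow_card z) k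

/-- For `n` odd, `gcd(k,n) = 1`, `q = 2^k`, `s` the inverse of
`q - 1` mod `2^n - 1`, and `c ∈ F_{2^n}`: if `(v+1)^(q+1) + c·v = 0` has
exactly three solutions in `F_{2^n}`, then every solution `v` satisfies
`Tr(v^{-s}) = 0`, where `Tr(x) = ∑_{i<n} x^(2^i)`. -/
theorem three_solutions_trace_zero (n k : ℕ) (hn : 0 < n) (hnodd : Odd n)
    (hk : 0 < k) (hgcd : Nat.gcd k n = 1) (q : ℕ) (hq : q = 2 ^ k)
    (s : ℕ) (hs : (q - 1) * s ≡ 1 [MOD 2 ^ n - 1])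
    (F : Type*) [Field F] [Fintype F] (hcard : Fintype.card F = 2 ^ n)
    (c : F) (h3 : {v : F | (v + 1) ^ (q + 1) + c * v = 0}.ncard = 3) :
    ∀ v : F, (v + 1) ^ (q + 1) + c * v = 0 →
      (∑ i ∈ Finset.range n, ((v⁻¹) ^ s) ^ 2 ^ i) = 0 :=
  three_solutions_trace_zero_general n k q hq s hs F hcard c h3
end

section
/- Let n be an even positive integer not divisible by 6 and let k be a positive integer with gcd(k, n) = 1. Then every nonzero element X of F_{2^n} can be written in the form X = ω·x^{2^k+1} for some ω ∈ F_4 \ {0} and some nonzero x ∈ F_{2^n}. -/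
private lemma three_dvd_aux (n : ℕ) (h2 : 2 ∣ n) : 3 ∣ 2 ^ n - 1 := by
  obtain ⟨m, rfl⟩ := h2
  simpa [pow_mul] using Nat.sub_dvd_pow_sub_pow 4 1 m

private lemma nine_not_dvd_aux (n : ℕ) (hn6 : ¬ 6 ∣ n) : ¬ 9 ∣ 2 ^ n - 1 := by
  intro h9
  have h1 : (2 : ZMod 9) ^ n = 1 := by
    have : ((2 ^ n - 1 : ℕ) : ZMod 9) = 0 := (ZMod.natCast_eq_zero_iff _ _).2 h9
    have h2 : (1:ℕ) ≤ 2 ^ n := Nat.one_le_two_pow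
    push_cast [Nat.cast_sub h2] at this
    linear_combination this
  have key : (2 : ZMod 9) ^ (n % 6) = 1 := by
    conv at h1 => rw [← Nat.div_add_mod n 6, pow_add, pow_mul]; norm_num
    have h64 : (64 : ZMod 9) = 1 := by decide
    rw [h64, one_pow, one_mul] at h1
    exact h1
  have : ∀ r < 6, (2 : ZMod 9) ^ r = 1 → r = 0 := by decide
  exact hn6 (Nat.dvd_of_mod_eq_zero (this _ (Nat.mod_lt _ (by norm_num)) key))

private lemma coprime_aux (n k : ℕ) (hn : 0 < n) (hneven : 2 ∣ n)
    (hgcd : Nat.gcd k n = 1) (h9 : ¬ 9 ∣ 2 ^ n - 1) :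
    Nat.Coprime ((2 ^ n - 1) / 3) (2 ^ k + 1) := by
  by_contra hc
  obtain ⟨p, hp, hpM, hpq⟩ := Nat.Prime.not_coprime_iff_dvd.1 hc
  have hp' : p.Prime := hp
  have h3N : (3:ℕ) ∣ 2 ^ n - 1 := three_dvd_aux n hneven
  have hpN : p ∣ 2 ^ n - 1 := hpM.trans (Nat.div_dvd_of_dvd h3N)
  have hp2 : p ≠ 2 := by
    rintro rfl
    have h1 : (1:ℕ) ≤ 2 ^ n := Nat.one_le_two_pow
    have : ¬ 2 ∣ 2 ^ n - 1 := by
      intro h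
      have : 2 ∣ 2 ^ n := dvd_pow_self 2 hn.ne'
      omega
    exact this hpN
  haveI : Fact p.Prime := ⟨hp'⟩
  have h2n : (2 : ZMod p) ^ n = 1 := by
    have : ((2 ^ n - 1 : ℕ) : ZMod p) = 0 := (ZMod.natCast_eq_zero_iff _ _).2 hpN
    have h1 : (1:ℕ) ≤ 2 ^ n := Nat.one_le_two_pow
    push_cast [Nat.cast_sub h1] at this
    linear_combination this
  have hq2k : (2 ^ k + 1 : ℕ) ∣ 2 ^ (2 * k) - 1 := by
    refine ⟨2 ^ k - 1, ?_⟩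
    rw [show 2 ^ (2 * k) = (2 ^ k) ^ 2 by rw [pow_mul'], show (1:ℕ) = 1 ^ 2 by rfl,
      Nat.sq_sub_sq, one_pow]
  have h22k : (2 : ZMod p) ^ (2 * k) = 1 := by
    have hd : p ∣ 2 ^ (2 * k) - 1 := hpq.trans hq2k
    have : ((2 ^ (2 * k) - 1 : ℕ) : ZMod p) = 0 := (ZMod.natCast_eq_zero_iff _ _).2 hd
    have h1 : (1:ℕ) ≤ 2 ^ (2 * k) := Nat.one_le_two_pow
    push_cast [Nat.cast_sub h1] at this
    linear_combination this
  set e := orderOf (2 : ZMod p) with he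
  have hen : e ∣ n := orderOf_dvd_of_pow_eq_one h2n
  have he2k : e ∣ 2 * k := orderOf_dvd_of_pow_eq_one h22k
  have hg2 : e ∣ 2 := by
    have h1 : e ∣ Nat.gcd (2 * k) n := Nat.dvd_gcd he2k hen
    have h2 : Nat.gcd (2 * k) n ∣ 2 := by
      have hck : Nat.Coprime (Nat.gcd (2 * k) n) k :=
        Nat.Coprime.coprime_dvd_left (Nat.gcd_dvd_right _ _) (Nat.coprime_comm.1 hgcd)
      exact hck.dvd_of_dvd_mul_right (Nat.gcd_dvd_left _ _)
    exact h1.trans h2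
  have h4 : (2 : ZMod p) ^ 2 = 1 := orderOf_dvd_iff_pow_eq_one.mp hg2
  have hp3 : p ∣ 3 := by
    have : ((3 : ℕ) : ZMod p) = 0 := by push_cast; linear_combination h4
    exact (ZMod.natCast_eq_zero_iff _ _).1 this
  have hpe3 : p = 3 := by
    rcases (Nat.Prime.eq_one_or_self_of_dvd Nat.prime_three p hp3) with h | h
    · exact absurd h hp'.one_lt.ne'
    · exact h
  subst hpe3
  exact h9 (by obtain ⟨c, hc⟩ := hpM; exact ⟨c, by omega⟩)

/-- For `n` even, not divisible by 6, and `gcd(k,n) = 1`, every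
nonzero `X ∈ F_{2^n}` can be written as `X = ω·x^(2^k+1)` with `ω` a nonzero
element of the subfield `F_4` (i.e. `ω^4 = ω`, `ω ≠ 0`) and `x ≠ 0`. -/
theorem decomposition_omega_gold (n k : ℕ) (hn : 0 < n) (hneven : 2 ∣ n)
    (hn6 : ¬ (6 ∣ n)) (hk : 0 < k) (hgcd : Nat.gcd k n = 1)
    (F : Type*) [Field F] [Fintype F] (hcard : Fintype.card F = 2 ^ n) :
    ∀ X : F, X ≠ 0 → ∃ ω x : F, ω ≠ 0 ∧ ω ^ 4 = ω ∧ x ≠ 0 ∧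
      X = ω * x ^ (2 ^ k + 1) := by
  intro X hX
  classical
  have h3N : 3 ∣ 2 ^ n - 1 := three_dvd_aux n hneven
  have hcop : Nat.Coprime ((2 ^ n - 1) / 3) (2 ^ k + 1) :=
    coprime_aux n k hn hneven hgcd (nine_not_dvd_aux n hn6)
  set q : ℕ := 2 ^ k + 1 with hq
  set N : ℕ := 2 ^ n - 1 with hN
  set M : ℕ := N / 3 with hM
  have hMN : 3 * M = N := Nat.mul_div_cancel' h3N
  have hcardU : Fintype.card Fˣ = N := by
    rw [Fintype.card_units, hcard]
  obtain ⟨g, hg⟩ := IsCyclic.exists_generator (α := Fˣ)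
  set Xu : Fˣ := Units.mk0 X hX with hXu
  obtain ⟨m, hm⟩ := hg Xu
  obtain ⟨u, v, huv⟩ := Nat.isCoprime_iff_coprime.2 hcop
  have hgN : g ^ (N : ℤ) = 1 := by
    rw [zpow_natCast, ← hcardU, pow_card_eq_one]
  refine ⟨((g ^ (m * u * (M : ℤ)) : Fˣ) : F), ((g ^ (m * v) : Fˣ) : F),
    Units.ne_zero _, ?_, Units.ne_zero _, ?_⟩
  · have h3 : (g ^ (m * u * (M : ℤ))) ^ 3 = 1 := by
      rw [← zpow_natCast (g ^ (m * u * (M:ℤ))) 3, ← zpow_mul]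
      have hexp : m * u * (M : ℤ) * ((3:ℕ):ℤ) = (N : ℤ) * (m * u) := by
        push_cast [← hMN]; ring
      rw [hexp, zpow_mul, hgN, one_zpow]
    calc ((g ^ (m * u * (M : ℤ)) : Fˣ) : F) ^ 4
        = (((g ^ (m * u * (M : ℤ))) ^ 3 : Fˣ) : F) * ((g ^ (m * u * (M : ℤ)) : Fˣ) : F) := by
          push_cast; ring
      _ = _ := by rw [h3]; simp
  · have key : g ^ (m * u * (M : ℤ)) * (g ^ (m * v)) ^ q = Xu := by
      rw [← zpow_natCast (g ^ (m * v)) q, ← zpow_mul, ← zpow_add]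
      have hexp : m * u * (M : ℤ) + m * v * (q : ℤ) = m * (u * (M : ℤ) + v * (q : ℤ)) := by
        ring
      rw [hexp, huv, mul_one]
      exact hm
    conv_lhs => rw [show X = (Xu : F) from rfl, ← key]
    push_cast
    ring
end

section
/- Let n be an even positive integer and k a positive integer with gcd(k, n) = 1 (so k is odd), let q = 2^k, let ε ∈ F_4 with ε^2 + ε = 1, and let ϖ ∈ F_4 \ {0}. For u ∈ F_{2^n} with u + u^q ≠ 0, define S = { (ϖ/(u + u^q))·(u + ε)^{q+1}, (ϖ/(u + u^q))·(u + 1 + ε)^{q+1} }. Then the following two sets are each equal to S: (i) { (ϖ·u^{q+1}/(u + u^q))·(u^{−1} + ε)^{q+1}, (ϖ·u^{q+1}/(u + u^q))·(u^{−1} + 1 + ε)^{q+1} }, and (ii) { (ϖ·(u+1)^{q+1}/(u + u^q))·((u+1)^{−1} + ε)^{q+1}, (ϖ·(u+1)^{q+1}/(u + u^q))·((u+1)^{−1} + 1 + ε)^{q+1} }. -/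
/-- For `n` even, `gcd(k,n) = 1` (so `k` odd), `q = 2^k`,
`ε ∈ F_4` with `ε^2 + ε = 1`, `ϖ ∈ F_4 \ {0}` (i.e. `ϖ^4 = ϖ`, `ϖ ≠ 0`), and
`u ∈ F_{2^n}` with `u ∉ F_2` and `u + u^q ≠ 0`, let
`S = {(ϖ/(u+u^q))·(u+ε)^(q+1), (ϖ/(u+u^q))·(u+1+ε)^(q+1)}`. Then both
(i) `{(ϖ·u^(q+1)/(u+u^q))·(u⁻¹+ε)^(q+1), (ϖ·u^(q+1)/(u+u^q))·(u⁻¹+1+ε)^(q+1)}`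
and (ii) `{(ϖ·(u+1)^(q+1)/(u+u^q))·((u+1)⁻¹+ε)^(q+1),
(ϖ·(u+1)^(q+1)/(u+u^q))·((u+1)⁻¹+1+ε)^(q+1)}` equal `S`. -/
theorem S_set_invariance (n k : ℕ) (hn : 0 < n) (hneven : 2 ∣ n)
    (hk : 0 < k) (hgcd : Nat.gcd k n = 1) (q : ℕ) (hq : q = 2 ^ k)
    (F : Type*) [Field F] [Fintype F] (hcard : Fintype.card F = 2 ^ n)
    (ε : F) (hε : ε ^ 2 + ε = 1)
    (ϖ : F) (hϖ0 : ϖ ≠ 0) (hϖ4 : ϖ ^ 4 = ϖ)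
    (u : F) (hu0 : u ≠ 0) (hu1 : u ≠ 1) (huq : u + u ^ q ≠ 0) :
    ({ϖ * u ^ (q + 1) / (u + u ^ q) * (u⁻¹ + ε) ^ (q + 1),
      ϖ * u ^ (q + 1) / (u + u ^ q) * (u⁻¹ + 1 + ε) ^ (q + 1)} : Set F) =
      ({ϖ / (u + u ^ q) * (u + ε) ^ (q + 1),
        ϖ / (u + u ^ q) * (u + 1 + ε) ^ (q + 1)} : Set F) ∧
    ({ϖ * (u + 1) ^ (q + 1) / (u + u ^ q) * ((u + 1)⁻¹ + ε) ^ (q + 1),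
      ϖ * (u + 1) ^ (q + 1) / (u + u ^ q) * ((u + 1)⁻¹ + 1 + ε) ^ (q + 1)} : Set F) =
      ({ϖ / (u + u ^ q) * (u + ε) ^ (q + 1),
        ϖ / (u + u ^ q) * (u + 1 + ε) ^ (q + 1)} : Set F) := by
  -- characteristic 2
  have h2 : (2 : F) = 0 := by
    have hc : ((Fintype.card F : ℕ) : F) = 0 := FiniteField.cast_card_eq_zero F
    rw [hcard] at hc
    push_cast at hc
    exact pow_eq_zero_iff (by omega) |>.mp hc
  -- basic facts about ε
  have hε2 : ε ^ 2 = 1 + ε := by linear_combination hε - ε * h2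
  have hε3 : ε ^ 3 = 1 := by linear_combination (ε - 1) * hε + (ε - 1) * h2
  -- k is odd
  have hk2 : ¬ (2 ∣ k) := by
    intro hdk
    have := Nat.dvd_gcd hdk hneven
    omega
  obtain ⟨j, hj⟩ : ∃ j, k = 2 * j + 1 := ⟨k / 2, by omega⟩
  have h4 : ∀ m : ℕ, ∃ t, 4 ^ m = 3 * t + 1 := by
    intro m
    induction m with
    | zero => exact ⟨0, rfl⟩
    | succ m ih => obtain ⟨t, ht⟩ := ih; exact ⟨4 * t + 1, by rw [pow_succ]; omega⟩
  obtain ⟨t, ht⟩ := h4 j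
  have hq3 : q = 3 * (2 * t) + 2 := by
    have h24 : (2 : ℕ) ^ k = 4 ^ j * 2 := by
      rw [hj, pow_succ, pow_mul]; norm_num
    omega
  have hεq : ε ^ q = ε ^ 2 := by
    rw [hq3, pow_add, pow_mul, hε3, one_pow, one_mul]
  have hεq1 : ε ^ (q + 1) = 1 := by
    rw [pow_succ, hεq, ← pow_succ, hε3]
  have hεq2 : (ε ^ 2) ^ (q + 1) = 1 := by
    rw [← pow_mul, mul_comm, pow_mul, hεq1, one_pow]
  have hu1' : u + 1 ≠ 0 := by
    intro h; apply hu1; linear_combination h - h2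
  have hinv : u * u⁻¹ = 1 := mul_inv_cancel₀ hu0
  have hinv1 : (u + 1) * (u + 1)⁻¹ = 1 := mul_inv_cancel₀ hu1'
  -- key identities
  have key1 : u ^ (q + 1) * (u⁻¹ + ε) ^ (q + 1) = (u + 1 + ε) ^ (q + 1) := by
    rw [← mul_pow, show u * (u⁻¹ + ε) = ε * (u + 1 + ε) from by linear_combination hinv - hε,
      mul_pow, hεq1, one_mul]
  have key2 : u ^ (q + 1) * (u⁻¹ + 1 + ε) ^ (q + 1) = (u + ε) ^ (q + 1) := by
    rw [← mul_pow, show u * (u⁻¹ + 1 + ε) = ε ^ 2 * (u + ε) from by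
      linear_combination hinv + (-u) * hε2 - hε3, mul_pow, hεq2, one_mul]
  have key3 : (u + 1) ^ (q + 1) * ((u + 1)⁻¹ + ε) ^ (q + 1) = (u + ε) ^ (q + 1) := by
    rw [← mul_pow, show (u + 1) * ((u + 1)⁻¹ + ε) = ε * (u + ε) from by
      linear_combination hinv1 - hε2, mul_pow, hεq1, one_mul]
  have key4 : (u + 1) ^ (q + 1) * ((u + 1)⁻¹ + 1 + ε) ^ (q + 1) = (u + 1 + ε) ^ (q + 1) := by
    rw [← mul_pow, show (u + 1) * ((u + 1)⁻¹ + 1 + ε) = ε ^ 2 * (u + 1 + ε) from by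
      linear_combination hinv1 + (-u - 1) * hε2 - hε3, mul_pow, hεq2, one_mul]
  have e1 : ϖ * u ^ (q + 1) / (u + u ^ q) * (u⁻¹ + ε) ^ (q + 1)
      = ϖ / (u + u ^ q) * (u + 1 + ε) ^ (q + 1) := by
    rw [← key1]; ring
  have e2 : ϖ * u ^ (q + 1) / (u + u ^ q) * (u⁻¹ + 1 + ε) ^ (q + 1)
      = ϖ / (u + u ^ q) * (u + ε) ^ (q + 1) := by
    rw [← key2]; ring
  have e3 : ϖ * (u + 1) ^ (q + 1) / (u + u ^ q) * ((u + 1)⁻¹ + ε) ^ (q + 1)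
      = ϖ / (u + u ^ q) * (u + ε) ^ (q + 1) := by
    rw [← key3]; ring
  have e4 : ϖ * (u + 1) ^ (q + 1) / (u + u ^ q) * ((u + 1)⁻¹ + 1 + ε) ^ (q + 1)
      = ϖ / (u + u ^ q) * (u + 1 + ε) ^ (q + 1) := by
    rw [← key4]; ring
  constructor
  · rw [e1, e2, Set.pair_comm]
  · rw [e3, e4, Set.pair_comm]
end
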